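/- In the setting of an empty rectangle move (σ, τ = σ∘(i j) as above, with no interior dots), and with two decoration sets O, X ⊆ ℤ² of odd points, the Alexander grading A(x) := (M_O(x) − M_X(x))/2 − (n−ℓ)/2 satisfies A(x_σ) − A(x_τ) = #(X ∩ R) − #(O ∩ R), where R = {b : 2i < b₁ < 2j, 2σ(i) < b₂ < 2σ(j)} and ℓ, n are constants. -/

import Mathlib

/-- `2·J(A,B)` is the number of pairs `(a,b) ∈ A × B` with `(b₁-a₁)(b₂-a₂) > 0`. -/
def J (A B : Finset (ℤ × ℤ)) : ℚ :=
  (((A ×ˢ B).filter (fun p => 0 < (p.2.1 - p.1.1) * (p.2.2 - p.1.2))).card : ℚ) / 2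

/-- The Maslov grading `M_B(A) = J(A,A) - 2J(A,B) + J(B,B) + 1`. -/
def M (B A : Finset (ℤ × ℤ)) : ℚ := J A A - 2 * J A B + J B B + 1

/-- The Alexander grading `A(x) = (M_O(x) - M_X(x))/2 - (n - ℓ)/2`. -/
def alexander (O X : Finset (ℤ × ℤ)) (n ℓ : ℕ) (x : Finset (ℤ × ℤ)) : ℚ :=
  (M O x - M X x) / 2 - ((n : ℚ) - (ℓ : ℚ)) / 2

/-- The set of dots of the generator associated to `σ`: `{(2l, 2σ(l)) : l ∈ Fin n}`. -/
def dots {n : ℕ} (σ : Equiv.Perm (Fin n)) : Finset (ℤ × ℤ) :=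
  Finset.univ.image (fun l : Fin n => (2 * ((l : ℕ) : ℤ), 2 * ((σ l : ℕ) : ℤ)))


/-! `M_O(x) - M_X(x)` is affine in the linking counts `J(x, O)` and `J(x, X)`, since `J(x, x)` cancels;
so only `J(x, O)` and `J(x, X)` change under the move. Transposing the values of `σ` at `i` and `j`
moves two dots to the other two corners of the rectangle `R`, and an odd point `b` gains or loses
a positively sloped pair with a corner only when it lies inside `R`: there the two old corners
both pair with `b` and the two new ones do not, so `2·J` drops by two for every such point. -/

theorem alexander_sub_alexander (O X : Finset (ℤ × ℤ)) (n ℓ : ℕ) (x y : Finset (ℤ × ℤ)) :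
    alexander O X n ℓ x - alexander O X n ℓ y = (J x X - J y X) - (J x O - J y O) := by
  simp only [alexander, M]
  ring

def posSlopeInd (a b : ℤ × ℤ) : ℚ := if 0 < (b.1 - a.1) * (b.2 - a.2) then 1 else 0

theorem two_mul_J_eq_sum (A B : Finset (ℤ × ℤ)) :
    2 * J A B = ∑ a ∈ A, ∑ b ∈ B, posSlopeInd a b := by
  rw [J, mul_div_cancel₀ _ two_ne_zero, Finset.card_filter, Finset.sum_product]
  push_cast [posSlopeInd]
  rfl

theorem sum_dots {n : ℕ} {R : Type*} [AddCommMonoid R] (σ : Equiv.Perm (Fin n)) (f : ℤ × ℤ → R) :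
    ∑ a ∈ dots σ, f a = ∑ l : Fin n, f (2 * ((l : ℕ) : ℤ), 2 * ((σ l : ℕ) : ℤ)) := by
  refine Finset.sum_image fun l _ m _ hlm => Fin.ext ?_
  simp only [Prod.mk.injEq] at hlm
  omega

theorem sum_swap_sub_sum {α R : Type*} [Fintype α] [DecidableEq α] [AddCommGroup R]
    (g : α → α → R) {i j : α} (hij : i ≠ j) :
    ∑ l, (g l (Equiv.swap i j l) - g l l) = (g i j - g i i) + (g j i - g j j) := by
  rw [Fintype.sum_eq_add i j hij fun l hl => by
    rw [Equiv.swap_apply_of_ne_of_ne hl.1 hl.2, sub_self]]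
  rw [Equiv.swap_apply_left, Equiv.swap_apply_right]

theorem posSlopeInd_swap_corners {p q r s : ℤ} (hpq : p < q) (hrs : r < s) {b : ℤ × ℤ}
    (hp : b.1 ≠ p) (hq : b.1 ≠ q) (hr : b.2 ≠ r) (hs : b.2 ≠ s) :
    (posSlopeInd (p, s) b - posSlopeInd (p, r) b) + (posSlopeInd (q, r) b - posSlopeInd (q, s) b)
      = -(if p < b.1 ∧ b.1 < q ∧ r < b.2 ∧ b.2 < s then 2 else 0) := by
  simp only [posSlopeInd, mul_pos_iff]
  split_ifs <;> norm_num <;> omega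

theorem Odd.ne_two_mul {x : ℤ} (hx : Odd x) (k : ℤ) : x ≠ 2 * k := by
  obtain ⟨u, rfl⟩ := hx
  omega

theorem J_dots_sub_J_dots_mul_swap {n : ℕ} (σ : Equiv.Perm (Fin n)) {i j : Fin n}
    (hij : i < j) (hσ : σ i < σ j) (B : Finset (ℤ × ℤ)) (hB : ∀ b ∈ B, Odd b.1 ∧ Odd b.2) :
    J (dots σ) B - J (dots (σ * Equiv.swap i j)) B
      = ((B.filter (fun b => 2 * ((i : ℕ) : ℤ) < b.1 ∧ b.1 < 2 * ((j : ℕ) : ℤ) ∧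
            2 * ((σ i : ℕ) : ℤ) < b.2 ∧ b.2 < 2 * ((σ j : ℕ) : ℤ))).card : ℚ) := by
  have hpq : 2 * ((i : ℕ) : ℤ) < 2 * ((j : ℕ) : ℤ) := by have := Fin.lt_def.mp hij; omega
  have hrs : 2 * ((σ i : ℕ) : ℤ) < 2 * ((σ j : ℕ) : ℤ) := by have := Fin.lt_def.mp hσ; omega
  have hchange : ∀ b ∈ B,
      ∑ l : Fin n, (posSlopeInd (2 * ((l : ℕ) : ℤ), 2 * ((σ (Equiv.swap i j l) : ℕ) : ℤ)) b
        - posSlopeInd (2 * ((l : ℕ) : ℤ), 2 * ((σ l : ℕ) : ℤ)) b)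
      = -(if 2 * ((i : ℕ) : ℤ) < b.1 ∧ b.1 < 2 * ((j : ℕ) : ℤ) ∧
            2 * ((σ i : ℕ) : ℤ) < b.2 ∧ b.2 < 2 * ((σ j : ℕ) : ℤ) then 2 else 0) := by
    intro b hb
    obtain ⟨hb₁, hb₂⟩ := hB b hb
    rw [sum_swap_sub_sum (fun l m : Fin n => posSlopeInd (2 * ((l : ℕ) : ℤ), 2 * ((σ m : ℕ) : ℤ)) b)
      hij.ne]
    exact posSlopeInd_swap_corners hpq hrs (hb₁.ne_two_mul _) (hb₁.ne_two_mul _)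
      (hb₂.ne_two_mul _) (hb₂.ne_two_mul _)
  have htwice : 2 * J (dots (σ * Equiv.swap i j)) B - 2 * J (dots σ) B
      = -(2 * ((B.filter (fun b => 2 * ((i : ℕ) : ℤ) < b.1 ∧ b.1 < 2 * ((j : ℕ) : ℤ) ∧
            2 * ((σ i : ℕ) : ℤ) < b.2 ∧ b.2 < 2 * ((σ j : ℕ) : ℤ))).card : ℚ)) := by
    simp only [two_mul_J_eq_sum, sum_dots, Equiv.Perm.mul_apply]
    rw [Finset.sum_comm, Finset.sum_comm (s := Finset.univ), ← Finset.sum_sub_distrib,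
      Finset.sum_congr rfl fun b hb => (Finset.sum_sub_distrib ..).symm.trans (hchange b hb),
      Finset.sum_neg_distrib, ← Finset.sum_filter, Finset.sum_const, nsmul_eq_mul, mul_comm]
  linarith

theorem alexander_empty_rectangle_general (n : ℕ) (σ : Equiv.Perm (Fin n)) (i j : Fin n)
    (hij : i < j) (hσ : σ i < σ j)
    (O X : Finset (ℤ × ℤ))
    (hO : ∀ b ∈ O, Odd b.1 ∧ Odd b.2) (hX : ∀ b ∈ X, Odd b.1 ∧ Odd b.2)
    (ℓ : ℕ) :
    alexander O X n ℓ (dots σ) - alexander O X n ℓ (dots (σ * Equiv.swap i j))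
      = ((X.filter (fun b => 2 * ((i : ℕ) : ℤ) < b.1 ∧ b.1 < 2 * ((j : ℕ) : ℤ) ∧
            2 * ((σ i : ℕ) : ℤ) < b.2 ∧ b.2 < 2 * ((σ j : ℕ) : ℤ))).card : ℚ)
        - ((O.filter (fun b => 2 * ((i : ℕ) : ℤ) < b.1 ∧ b.1 < 2 * ((j : ℕ) : ℤ) ∧
            2 * ((σ i : ℕ) : ℤ) < b.2 ∧ b.2 < 2 * ((σ j : ℕ) : ℤ))).card : ℚ) := by
  rw [alexander_sub_alexander, J_dots_sub_J_dots_mul_swap σ hij hσ X hX,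
    J_dots_sub_J_dots_mul_swap σ hij hσ O hO]

/-- For an empty rectangle move, the Alexander grading satisfies
`A(x_σ) - A(x_τ) = #(X ∩ R) - #(O ∩ R)` where `R` is the rectangle spanned by the
swapped dots. -/
theorem alexander_empty_rectangle (n : ℕ) (σ : Equiv.Perm (Fin n)) (i j : Fin n)
    (hij : i < j) (hσ : σ i < σ j)
    (hempty : ¬ ∃ k : Fin n, i < k ∧ k < j ∧ σ i < σ k ∧ σ k < σ j)
    (O X : Finset (ℤ × ℤ))
    (hO : ∀ b ∈ O, Odd b.1 ∧ Odd b.2) (hX : ∀ b ∈ X, Odd b.1 ∧ Odd b.2)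
    (ℓ : ℕ) :
    alexander O X n ℓ (dots σ) - alexander O X n ℓ (dots (σ * Equiv.swap i j))
      = ((X.filter (fun b => 2 * ((i : ℕ) : ℤ) < b.1 ∧ b.1 < 2 * ((j : ℕ) : ℤ) ∧
            2 * ((σ i : ℕ) : ℤ) < b.2 ∧ b.2 < 2 * ((σ j : ℕ) : ℤ))).card : ℚ)
        - ((O.filter (fun b => 2 * ((i : ℕ) : ℤ) < b.1 ∧ b.1 < 2 * ((j : ℕ) : ℤ) ∧
            2 * ((σ i : ℕ) : ℤ) < b.2 ∧ b.2 < 2 * ((σ j : ℕ) : ℤ))).card : ℚ) :=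
  alexander_empty_rectangle_general n σ i j hij hσ O X hO hX ℓ
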